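/- Let S be a seed of type (n,k) with (n,k) ≠ (4,1), let p_m be the inward spiral vertices generated by S, and let c be the unique point of ⋂_{m≥0} K_m, where K_m is the convex hull of the vertices of T_{n,k}^m(S). Then the spiral winds infinitely many times around c: for every closed ray R emanating from c and every M ≥ 0, there exists m ≥ M such that the segment [p_m, p_{m+1}] meets R. -/

import Mathlib

/-- Planar determinant (cross product) of two vectors of `ℝ²`. -/
def det2 (u v : ℝ × ℝ) : ℝ := u.1 * v.2 - u.2 * v.1

/-- Counterclockwise orientation of an ordered triple of points of `ℝ²`. -/
def ccw (a b c : ℝ × ℝ) : Prop := 0 < det2 (b - a) (c - a)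

/-- The (1-indexed) points `A 1, …, A n` are in strictly convex position in this
(counterclockwise) cyclic order: every triple taken in cyclic order is
counterclockwise. -/
def ConvexCyc (n : ℕ) (A : ℕ → ℝ × ℝ) : Prop :=
  ∀ i j l : ℕ, 1 ≤ i → i < j → j < l → l ≤ n → ccw (A i) (A j) (A l)

/-- A seed of type `(n,k)`: the points `A 1, …, A n` are in strictly convex position
in counterclockwise cyclic order, and for `j = n-k+1, …, n` the point `B j` lies in
the open segment between `A j` and `A (j+1)` (indices mod `n`, so `A (n+1) = A 1`;
note `j % n + 1` equals `j + 1` for `j < n` and equals `1` for `j = n`).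
Only the values `A 1, …, A n` and `B (n-k+1), …, B n` are relevant. -/
def IsSeed (n k : ℕ) (A B : ℕ → ℝ × ℝ) : Prop :=
  ConvexCyc n A ∧
    ∀ j : ℕ, n - k + 1 ≤ j → j ≤ n →
      ∃ t ∈ Set.Ioo (0 : ℝ) 1, B j = A j + t • (A (j % n + 1) - A j)

/-- The point `p` lies on the line through `a` and `b`. -/
def onLine (a b p : ℝ × ℝ) : Prop := det2 (b - a) (p - a) = 0

/-- The intersection point of the line through `a`, `b` with the line through
`c`, `d` (when the two lines are non-parallel). -/
noncomputable def lineInter (a b c d : ℝ × ℝ) : ℝ × ℝ :=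
  a + (det2 (c - a) (d - c) / det2 (b - a) (d - c)) • (b - a)

/-- Auxiliary descending recursion producing the points `B*`: `BstAux n A Astar d`
is the point `B*_(n-d)`.  For `d = 0`, `B*_n` is the intersection of the line
through `A 1` and `A*_2` with the line through `A*_n` and `A*_1`; descending,
`B*_j` (`j = n - d - 1`) is the intersection of the line through `A (j+1)` and
`B*_(j+1)` with the line through `A*_j` and `A*_(j+1)`. -/
noncomputable def BstAux (n : ℕ) (A Astar : ℕ → ℝ × ℝ) : ℕ → ℝ × ℝ
  | 0 => lineInter (A 1) (Astar 2) (Astar n) (Astar 1)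
  | d + 1 => lineInter (A (n - d)) (BstAux n A Astar d) (Astar (n - d - 1)) (Astar (n - d))

/-- The seed map `T_{n,k}`, sending the configuration `(A, B)` to `(A*, B*)`:
`A*_i = A_(i+1)` for `i = 1, …, n-k`; `A*_i = B_i` for `i = n-k+1, …, n`; and the
points `B*_j`, `j = n, n-1, …, n-k+1`, are produced by the descending intersection
recursion `BstAux`. -/
noncomputable def seedMap (n k : ℕ) (S : (ℕ → ℝ × ℝ) × (ℕ → ℝ × ℝ)) :
    (ℕ → ℝ × ℝ) × (ℕ → ℝ × ℝ) :=
  let Astar : ℕ → ℝ × ℝ := fun i => if i ≤ n - k then S.1 (i + 1) else S.2 i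
  (Astar, fun j => BstAux n S.1 Astar (n - j))

/-!
The seed map keeps the polygon strictly convex, and each new vertex `A** j` (`j > n - k`) lies on
the chord joining `A (j+1)` to `A** (j+1)`; every other vertex is itself a later spiral point.
Descending in `j`, every vertex of the `m`-th polygon is a convex combination of spiral points
`p r` with `r ≥ m - 2n`, so `c`, which lies in every `K m`, lies in the convex hull of every tail
of the spiral. Since `[p m, p (m+1)] = [A 1, A 2]` is an edge of `K m`, the point `c` is to the
left of it (or on it): the spiral turns counterclockwise around `c`. If it missed a ray from `c`
from some time on, its side of the ray's line could only switch from the left to the right, so it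
would eventually stay strictly on one side, and `c` could not be in the hull of that tail.
-/

open Set

def orient (p q r : ℝ × ℝ) : ℝ := det2 (q - p) (r - p)

lemma orient_eq (p q r : ℝ × ℝ) :
    orient p q r = (q.1 - p.1) * (r.2 - p.2) - (q.2 - p.2) * (r.1 - p.1) := rfl

lemma ccw_iff_orient_pos (p q r : ℝ × ℝ) : ccw p q r ↔ 0 < orient p q r := Iff.rfl

lemma orient_rotate (p q r : ℝ × ℝ) : orient p q r = orient q r p := by
  simp only [orient_eq]; ring

lemma orient_self_left (p r : ℝ × ℝ) : orient p p r = 0 := by simp [orient_eq]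

lemma orient_self_right (p q : ℝ × ℝ) : orient p q q = 0 := by simp only [orient_eq]; ring

lemma orient_self_left_right (p q : ℝ × ℝ) : orient p q p = 0 := by simp only [orient_eq]; ring

lemma orient_affine_left (p p' q r : ℝ × ℝ) (t : ℝ) :
    orient (p + t • (p' - p)) q r = (1 - t) * orient p q r + t * orient p' q r := by
  simp only [orient_eq, Prod.fst_add, Prod.snd_add, Prod.fst_sub, Prod.snd_sub, Prod.smul_fst,
    Prod.smul_snd, smul_eq_mul]; ring

lemma orient_affine_mid (p q q' r : ℝ × ℝ) (t : ℝ) :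
    orient p (q + t • (q' - q)) r = (1 - t) * orient p q r + t * orient p q' r := by
  simp only [orient_eq, Prod.fst_add, Prod.snd_add, Prod.fst_sub, Prod.snd_sub, Prod.smul_fst,
    Prod.smul_snd, smul_eq_mul]; ring

lemma orient_affine_right (p q r r' : ℝ × ℝ) (t : ℝ) :
    orient p q (r + t • (r' - r)) = (1 - t) * orient p q r + t * orient p q r' := by
  simp only [orient_eq, Prod.fst_add, Prod.snd_add, Prod.fst_sub, Prod.snd_sub, Prod.smul_fst,
    Prod.smul_snd, smul_eq_mul]; ring

lemma orient_add_smul_add_smul (p q x y : ℝ × ℝ) {a b : ℝ} (hab : a + b = 1) :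
    orient p q (a • x + b • y) = a * orient p q x + b * orient p q y := by
  obtain rfl : a = 1 - b := by linarith
  simp only [orient_eq, Prod.fst_add, Prod.snd_add, Prod.smul_fst, Prod.smul_snd, smul_eq_mul]
  ring

lemma convex_setOf_orient_mem (p q : ℝ × ℝ) {s : Set ℝ} (hs : Convex ℝ s) :
    Convex ℝ {x | orient p q x ∈ s} := by
  intro x hx y hy a b ha hb hab
  show orient p q (a • x + b • y) ∈ s
  rw [orient_add_smul_add_smul p q x y hab]
  exact hs hx hy ha hb hab

lemma orient_eq_zero_of_mem_segment {p q x : ℝ × ℝ} (hx : x ∈ segment ℝ p q) :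
    orient p q x = 0 := by
  have hsub : segment ℝ p q ⊆ {x | orient p q x ∈ ({0} : Set ℝ)} :=
    (convex_setOf_orient_mem p q (convex_singleton 0)).segment_subset
      (orient_self_left_right p q) (orient_self_right p q)
  exact hsub hx

def halfOpenSegment (a b : ℝ × ℝ) : Set (ℝ × ℝ) := (fun t : ℝ => a + t • (b - a)) '' Ioc 0 1

lemma right_mem_halfOpenSegment (a b : ℝ × ℝ) : b ∈ halfOpenSegment a b :=
  ⟨1, ⟨one_pos, le_rfl⟩, by simp⟩

lemma openSegment_subset_halfOpenSegment (a b : ℝ × ℝ) :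
    openSegment ℝ a b ⊆ halfOpenSegment a b := by
  rw [openSegment_eq_image']
  exact image_mono Ioo_subset_Ioc_self

/-- `orient` is affine in each argument, so on a product of three segments it is a convex
combination of its values at the eight triples of endpoints. -/
lemma orient_pos_of_mem_halfOpenSegment {a a' b b' c c' x y z : ℝ × ℝ}
    (hx : x ∈ halfOpenSegment a a') (hy : y ∈ halfOpenSegment b b')
    (hz : z ∈ halfOpenSegment c c') (habc : 0 ≤ orient a b c) (habc' : 0 ≤ orient a b c')
    (hab'c : 0 ≤ orient a b' c) (hab'c' : 0 ≤ orient a b' c') (ha'bc : 0 ≤ orient a' b c)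
    (ha'bc' : 0 ≤ orient a' b c') (ha'b'c : 0 ≤ orient a' b' c) (ha'b'c' : 0 < orient a' b' c') :
    0 < orient x y z := by
  obtain ⟨r, ⟨hr₀, hr₁⟩, rfl⟩ := hx
  obtain ⟨s, ⟨hs₀, hs₁⟩, rfl⟩ := hy
  obtain ⟨t, ⟨ht₀, ht₁⟩, rfl⟩ := hz
  rw [orient_affine_left, orient_affine_mid, orient_affine_mid, orient_affine_right,
    orient_affine_right, orient_affine_right, orient_affine_right]
  positivity

lemma div_sub_mem_Ioo_of_mul_neg {x y : ℝ} (h : x * y < 0) : x / (x - y) ∈ Ioo 0 1 := by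
  rcases mul_neg_iff.1 h with ⟨hx, hy⟩ | ⟨hx, hy⟩
  · exact ⟨div_pos hx (by linarith), (div_lt_one (by linarith)).2 (by linarith)⟩
  · exact ⟨div_pos_of_neg_of_neg hx (by linarith),
      (div_lt_one_of_neg (by linarith)).2 (by linarith)⟩

lemma lineInter_comm {a b c d : ℝ × ℝ} (h : det2 (b - a) (d - c) ≠ 0) :
    lineInter a b c d = lineInter c d a b := by
  obtain ⟨a₁, a₂⟩ := a; obtain ⟨b₁, b₂⟩ := b; obtain ⟨c₁, c₂⟩ := c; obtain ⟨d₁, d₂⟩ := d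
  simp only [lineInter, det2, Prod.mk_sub_mk, Prod.smul_mk, Prod.mk_add_mk, smul_eq_mul,
    Prod.mk.injEq] at h ⊢
  have h' : (d₂ - c₂) * (b₁ - a₁) - (d₁ - c₁) * (b₂ - a₂) ≠ 0 := by contrapose! h; linarith
  have h'' : (d₁ - c₁) * (b₂ - a₂) - (d₂ - c₂) * (b₁ - a₁) ≠ 0 := by contrapose! h; linarith
  constructor <;> field_simp <;> ring

lemma lineInter_mem_openSegment_left {a b c d : ℝ × ℝ} (h : orient c d a * orient c d b < 0) :
    lineInter a b c d ∈ openSegment ℝ a b := by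
  have hnum : det2 (c - a) (d - c) = orient c d a := by
    simp only [orient_eq, det2, Prod.fst_sub, Prod.snd_sub]; ring
  have hden : det2 (b - a) (d - c) = orient c d a - orient c d b := by
    simp only [orient_eq, det2, Prod.fst_sub, Prod.snd_sub]; ring
  rw [openSegment_eq_image']
  exact ⟨_, div_sub_mem_Ioo_of_mul_neg h, by rw [lineInter, hnum, hden]⟩

lemma lineInter_mem_openSegment_right {a b c d : ℝ × ℝ} (h : orient a b c * orient a b d < 0) :
    lineInter a b c d ∈ openSegment ℝ c d := by
  have hden : det2 (b - a) (d - c) ≠ 0 := by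
    have : det2 (b - a) (d - c) = orient a b d - orient a b c := by
      simp only [orient_eq, det2, Prod.fst_sub, Prod.snd_sub]; ring
    rw [this]; intro h0; rw [sub_eq_zero.1 h0] at h; nlinarith
  rw [lineInter_comm hden]
  exact lineInter_mem_openSegment_left h

/-- One step of the descending construction of the points `B*`. -/
lemma lineInter_mem_openSegment_of_quadrilateral {P₀ P₁ P₂ P₃ X Y Z W : ℝ × ℝ}
    (h₀₁₂ : 0 < orient P₀ P₁ P₂) (h₀₁₃ : 0 < orient P₀ P₁ P₃) (h₀₂₃ : 0 < orient P₀ P₂ P₃)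
    (h₁₂₃ : 0 < orient P₁ P₂ P₃) (hX : X ∈ openSegment ℝ P₀ P₁)
    (hY : Y ∈ halfOpenSegment P₁ P₂) (hZ : Z ∈ halfOpenSegment P₂ P₃)
    (hW : W ∈ halfOpenSegment Y Z) :
    lineInter P₁ W X Y ∈ openSegment ℝ X Y ∧ lineInter P₁ W X Y ∈ openSegment ℝ P₁ W := by
  rw [openSegment_eq_image'] at hX
  obtain ⟨r, ⟨hr₀, hr₁⟩, hX⟩ := hX
  obtain ⟨s, ⟨hs₀, hs₁⟩, hY⟩ := hY
  obtain ⟨t, ⟨ht₀, ht₁⟩, hZ⟩ := hZ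
  obtain ⟨w, ⟨hw₀, hw₁⟩, hW⟩ := hW
  obtain ⟨hPWX, hPWY, hXYP, hXYW⟩ :
      orient P₁ W X = (1 - r) * ((1 - w) * (s * orient P₀ P₁ P₂)
        + w * ((1 - t) * orient P₀ P₁ P₂ + t * orient P₀ P₁ P₃)) ∧
      orient P₁ W Y = -(w * s * t * orient P₁ P₂ P₃) ∧
      orient X Y P₁ = -((1 - r) * s * orient P₀ P₁ P₂) ∧
      orient X Y W = w * ((1 - r) * (1 - s) * (1 - t) * orient P₀ P₁ P₂
        + (1 - r) * (1 - s) * t * orient P₀ P₁ P₃ + (1 - r) * s * t * orient P₀ P₂ P₃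
        + r * s * t * orient P₁ P₂ P₃) := by
    subst X Y Z W
    refine ⟨?_, ?_, ?_, ?_⟩ <;>
    · simp only [orient_eq, Prod.fst_add, Prod.snd_add, Prod.fst_sub, Prod.snd_sub,
        Prod.smul_fst, Prod.smul_snd, smul_eq_mul]
      ring
  refine ⟨lineInter_mem_openSegment_right ?_, lineInter_mem_openSegment_left ?_⟩
  · refine mul_neg_of_pos_of_neg ?_ ?_
    · rw [hPWX]; positivity
    · rw [hPWY, neg_lt_zero]; positivity
  · refine mul_neg_of_neg_of_pos ?_ ?_
    · rw [hXYP, neg_lt_zero]; positivity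
    · rw [hXYW]; positivity

lemma exists_mem_segment_eq_add_smul {c p₁ p₂ u : ℝ × ℝ} (hu : u ≠ 0)
    (h : 0 < orient p₁ p₂ c) (h₁ : orient c (c + u) p₁ ≤ 0) (h₂ : 0 ≤ orient c (c + u) p₂) :
    ∃ x ∈ segment ℝ p₁ p₂, ∃ t : ℝ, 0 ≤ t ∧ x = c + t • u := by
  set α := orient c (c + u) p₂
  set β := -orient c (c + u) p₁
  set D := orient p₁ p₂ c
  -- Cramer's rule in the plane: `D • u = α • (p₁ - c) + β • (p₂ - c)`.
  have key : α • p₁ + β • p₂ = (α + β) • c + D • u := by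
    ext <;> simp only [α, β, D, orient_eq, Prod.fst_add, Prod.snd_add, Prod.smul_fst,
      Prod.smul_snd, smul_eq_mul] <;> ring
  have hβ₀ : 0 ≤ β := neg_nonneg.2 h₁
  have hαβ : 0 < α + β := by
    refine lt_of_le_of_ne (by linarith) fun h0 => hu ?_
    have hα : α = 0 := by linarith
    have hβ : β = 0 := by linarith
    rw [hα, hβ] at key
    simp only [zero_smul, add_zero, zero_add] at key
    exact (smul_eq_zero.1 key.symm).resolve_left h.ne'
  refine ⟨(α + β)⁻¹ • (α • p₁ + β • p₂),
    ⟨(α + β)⁻¹ * α, (α + β)⁻¹ * β, by positivity, by positivity, by field_simp,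
      by rw [smul_add, smul_smul, smul_smul]⟩, (α + β)⁻¹ * D, by positivity, ?_⟩
  rw [key, smul_add, smul_smul, inv_mul_cancel₀ hαβ.ne', one_smul, smul_smul]

lemma convex_setOf_orient_pos_union_segment (p q : ℝ × ℝ) :
    Convex ℝ ({x | 0 < orient p q x} ∪ segment ℝ p q) := by
  have hnonneg : ∀ x ∈ {x | 0 < orient p q x} ∪ segment ℝ p q, 0 ≤ orient p q x := by
    rintro x (hx | hx)
    exacts [le_of_lt hx, (orient_eq_zero_of_mem_segment hx).ge]
  rw [convex_iff_openSegment_subset]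
  intro x hx y hy z hz
  by_cases hseg : x ∈ segment ℝ p q ∧ y ∈ segment ℝ p q
  · exact Or.inr ((convex_segment p q).openSegment_subset hseg.1 hseg.2 hz)
  obtain ⟨a, b, ha, hb, hab, rfl⟩ := hz
  left
  show 0 < orient p q (a • x + b • y)
  rw [orient_add_smul_add_smul p q x y hab]
  have hx₀ := hnonneg x hx
  have hy₀ := hnonneg y hy
  rcases hx with hx | hx
  · nlinarith [mul_pos ha hx, mul_nonneg hb.le hy₀]
  · rcases hy with hy | hy
    · nlinarith [mul_pos hb hy, mul_nonneg ha.le hx₀]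
    · exact absurd ⟨hx, hy⟩ hseg

lemma orient_pos_or_mem_segment_of_mem_convexHull {V : Set (ℝ × ℝ)} {p q x : ℝ × ℝ}
    (hV : ∀ v ∈ V, 0 < orient p q v ∨ v = p ∨ v = q) (hx : x ∈ convexHull ℝ V) :
    0 < orient p q x ∨ x ∈ segment ℝ p q := by
  refine convexHull_min (fun v hv => ?_) (convex_setOf_orient_pos_union_segment p q) hx
  rcases hV v hv with h | rfl | rfl
  exacts [Or.inl h, Or.inr (left_mem_segment ℝ v q), Or.inr (right_mem_segment ℝ p v)]

lemma exists_forall_pos_or_forall_neg {a : ℕ → ℝ} {M : ℕ}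
    (h : ∀ m ≥ M, a m ≤ 0 → a (m + 1) < 0) :
    ∃ N ≥ M, (∀ m ≥ N, 0 < a m) ∨ ∀ m ≥ N, a m < 0 := by
  by_cases hpos : ∀ m ≥ M, 0 < a m
  · exact ⟨M, le_rfl, Or.inl hpos⟩
  push Not at hpos
  obtain ⟨m₀, hm₀, ha₀⟩ := hpos
  refine ⟨m₀ + 1, by omega, Or.inr fun m hm => ?_⟩
  induction m, hm using Nat.le_induction with
  | base => exact h m₀ hm₀ ha₀
  | succ m hm ih => exact h m (by omega) ih.le

lemma notMem_convexHull_of_forall_orient_mem {p : ℕ → ℝ × ℝ} {c u : ℝ × ℝ} {N : ℕ} {s : Set ℝ}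
    (hs : Convex ℝ s) (h0 : 0 ∉ s) (hp : ∀ m ≥ N, orient c (c + u) (p m) ∈ s) :
    c ∉ convexHull ℝ (p '' Ici N) := fun hc => by
  have := convexHull_min (t := {x | orient c (c + u) x ∈ s})
    (by rintro _ ⟨m, hm, rfl⟩; exact hp m hm) (convex_setOf_orient_mem _ _ hs) hc
  exact h0 (orient_self_left_right c (c + u) ▸ this)

theorem exists_segment_meets_ray {p : ℕ → ℝ × ℝ} {c : ℝ × ℝ}
    (hturn : ∀ m, 0 < orient (p m) (p (m + 1)) c ∨ c ∈ segment ℝ (p m) (p (m + 1)))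
    (hacc : ∀ M, c ∈ convexHull ℝ (p '' Ici M)) {u : ℝ × ℝ} (hu : u ≠ 0) (M : ℕ) :
    ∃ m, M ≤ m ∧ ∃ x ∈ segment ℝ (p m) (p (m + 1)), ∃ t : ℝ, 0 ≤ t ∧ x = c + t • u := by
  by_contra! hmiss
  have hside : ∀ m ≥ M, orient c (c + u) (p m) ≤ 0 → orient c (c + u) (p (m + 1)) < 0 := by
    intro m hm h₁
    by_contra! h₂
    rcases hturn m with hpos | hc
    · obtain ⟨x, hx, t, ht, hxt⟩ := exists_mem_segment_eq_add_smul hu hpos h₁ h₂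
      exact hmiss m hm x hx t ht hxt
    · exact hmiss m hm c hc 0 le_rfl (by simp)
  obtain ⟨N, -, hpos | hneg⟩ := exists_forall_pos_or_forall_neg hside
  · exact notMem_convexHull_of_forall_orient_mem (convex_Ioi 0) self_notMem_Ioi hpos (hacc N)
  · exact notMem_convexHull_of_forall_orient_mem (convex_Iio 0) self_notMem_Iio hneg (hacc N)

/-- The `n`-periodic extension of the `1`-indexed sequence `f 1, …, f n`. -/
def cyc (n : ℕ) (f : ℕ → ℝ × ℝ) (i : ℕ) : ℝ × ℝ := f ((i - 1) % n + 1)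

section Cyclic

variable {n : ℕ} {f : ℕ → ℝ × ℝ}

lemma cyc_congr {i j : ℕ} (hi : 1 ≤ i) (hj : 1 ≤ j) (h : i ≡ j [MOD n]) :
    cyc n f i = cyc n f j := by
  unfold cyc
  congr 2
  exact Nat.ModEq.add_right_cancel' 1 (by rwa [Nat.sub_add_cancel hi, Nat.sub_add_cancel hj])

lemma cyc_of_le {i : ℕ} (hi : 1 ≤ i) (hin : i ≤ n) : cyc n f i = f i := by
  rw [cyc, Nat.mod_eq_of_lt (by omega), Nat.sub_add_cancel hi]

lemma cyc_add_self {i : ℕ} (hi : 1 ≤ i) : cyc n f (i + n) = cyc n f i :=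
  cyc_congr (by omega) hi Nat.add_modEq_right

lemma cyc_self_add {i : ℕ} (hi : 1 ≤ i) (hin : i ≤ n) : cyc n f (n + i) = f i := by
  rw [add_comm, cyc_add_self hi, cyc_of_le hi hin]

lemma cyc_succ (i : ℕ) : cyc n f (i + 1) = f (i % n + 1) := rfl

lemma cyc_mem_halfOpenSegment {g : ℕ → ℝ × ℝ} (hn : 0 < n)
    (h : ∀ i, 1 ≤ i → i ≤ n → f i ∈ halfOpenSegment (cyc n g i) (cyc n g (i + 1)))
    {i : ℕ} (hi : 1 ≤ i) : cyc n f i ∈ halfOpenSegment (cyc n g i) (cyc n g (i + 1)) := by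
  have hi' : (i - 1) % n + 1 ≤ n := Nat.mod_lt _ hn
  have hmod : i ≡ (i - 1) % n + 1 [MOD n] := by
    conv_lhs => rw [← Nat.sub_add_cancel hi]
    exact (Nat.mod_modEq (i - 1) n).symm.add_right 1
  rw [cyc_congr (f := f) hi (by omega) hmod, cyc_congr (f := g) hi (by omega) hmod,
    cyc_congr (f := g) (by omega) (by omega) (hmod.add_right 1),
    cyc_of_le (f := f) (by omega) hi']
  exact h _ (by omega) hi'

end Cyclic

namespace ConvexCyc

variable {n : ℕ} {A : ℕ → ℝ × ℝ}

lemma orient_cyc_pos (hA : ConvexCyc n A) {a b c : ℕ} (ha : 1 ≤ a) (hab : a < b) (hbc : b < c)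
    (hca : c < a + n) : 0 < orient (cyc n A a) (cyc n A b) (cyc n A c) := by
  induction a using Nat.strong_induction_on generalizing b c with
  | _ a ih =>
  by_cases han : n < a
  · obtain ⟨a, rfl⟩ := Nat.exists_eq_add_of_lt han
    rw [show n + a + 1 = a + 1 + n by omega, cyc_add_self (by omega),
      show b = b - n + n by omega, cyc_add_self (by omega),
      show c = c - n + n by omega, cyc_add_self (by omega)]
    exact ih (a + 1) (by omega) (by omega) (by omega) (by omega) (by omega)
  have hcyc : ∀ i, n < i → i ≤ 2 * n → cyc n A i = A (i - n) := fun i h₁ h₂ => by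
    rw [← Nat.sub_add_cancel h₁.le, cyc_add_self (by omega), cyc_of_le (by omega) (by omega),
      Nat.add_sub_cancel]
  rw [cyc_of_le ha (by omega)]
  by_cases hb : b ≤ n
  · rw [cyc_of_le (by omega) hb]
    by_cases hc : c ≤ n
    · rw [cyc_of_le (by omega) hc]; exact hA a b c ha hab hbc hc
    · rw [hcyc c (by omega) (by omega), orient_rotate, orient_rotate]
      exact hA (c - n) a b (by omega) (by omega) hab hb
  · rw [hcyc b (by omega) (by omega), hcyc c (by omega) (by omega), orient_rotate]
    exact hA (b - n) (c - n) a (by omega) (by omega) (by omega) (by omega)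

lemma orient_cyc_nonneg (hA : ConvexCyc n A) {a b c : ℕ} (ha : 1 ≤ a) (hab : a ≤ b) (hbc : b ≤ c)
    (hca : c ≤ a + n) : 0 ≤ orient (cyc n A a) (cyc n A b) (cyc n A c) := by
  obtain rfl | hab := hab.eq_or_lt
  · rw [orient_self_left]
  obtain rfl | hbc := hbc.eq_or_lt
  · rw [orient_self_right]
  obtain rfl | hca := hca.eq_or_lt
  · rw [cyc_add_self ha, orient_self_left_right]
  exact (hA.orient_cyc_pos ha hab hbc hca).le

lemma of_mem_halfOpenSegment (hA : ConvexCyc n A) {A' : ℕ → ℝ × ℝ}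
    (hA' : ∀ i, 1 ≤ i → i ≤ n → A' i ∈ halfOpenSegment (cyc n A i) (cyc n A (i + 1))) :
    ConvexCyc n A' := by
  intro i j l hi hij hjl hln
  rw [ccw_iff_orient_pos]
  refine orient_pos_of_mem_halfOpenSegment (hA' i hi (by omega)) (hA' j (by omega) (by omega))
    (hA' l (by omega) hln) ?_ ?_ ?_ ?_ ?_ ?_ ?_ (hA.orient_cyc_pos ?_ ?_ ?_ ?_) <;>
  first
  | exact hA.orient_cyc_nonneg (by omega) (by omega) (by omega) (by omega)
  | omega

lemma orient_pos_or_eq (hA : ConvexCyc n A) :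
    ∀ v ∈ A '' Icc 1 n, 0 < orient (A 1) (A 2) v ∨ v = A 1 ∨ v = A 2 := by
  rintro _ ⟨j, ⟨hj, hjn⟩, rfl⟩
  obtain rfl | rfl | hj := (by omega : j = 1 ∨ j = 2 ∨ 3 ≤ j)
  exacts [Or.inr (Or.inl rfl), Or.inr (Or.inr rfl), Or.inl (hA 1 2 j le_rfl one_lt_two hj hjn)]

end ConvexCyc

section SeedMap

variable {n k : ℕ}

lemma seedMap_fst_of_le (S : (ℕ → ℝ × ℝ) × (ℕ → ℝ × ℝ)) {i : ℕ} (hi : i ≤ n - k) :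
    (seedMap n k S).1 i = S.1 (i + 1) := if_pos hi

lemma seedMap_snd (S : (ℕ → ℝ × ℝ) × (ℕ → ℝ × ℝ)) (j : ℕ) :
    (seedMap n k S).2 j = BstAux n S.1 (seedMap n k S).1 (n - j) := rfl

lemma seedMap_fst_of_lt (S : (ℕ → ℝ × ℝ) × (ℕ → ℝ × ℝ)) {i : ℕ} (hi : n - k < i) :
    (seedMap n k S).1 i = S.2 i := if_neg (by omega)

/-- The recursion `BstAux` in uniform form: `A** (j+1)` is `B* (j+1)` for `j < n` and `A* 2` for
`j = n`. -/
lemma seedMap_snd_eq_lineInter (S : (ℕ → ℝ × ℝ) × (ℕ → ℝ × ℝ)) (hkn : k < n)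
    {j : ℕ} (hj : n - k < j) (hjn : j ≤ n) :
    (seedMap n k S).2 j = lineInter (cyc n S.1 (j + 1))
      (cyc n (seedMap n k (seedMap n k S)).1 (j + 1)) (cyc n (seedMap n k S).1 j)
      (cyc n (seedMap n k S).1 (j + 1)) := by
  rw [cyc_of_le (f := (seedMap n k S).1) (by omega) hjn, seedMap_snd]
  obtain rfl | hjn := hjn.eq_or_lt
  · have h₁ : ∀ f : ℕ → ℝ × ℝ, cyc j f (j + 1) = f 1 := fun f => cyc_self_add le_rfl (by omega)
    rw [h₁, h₁, h₁, seedMap_fst_of_le _ (by omega), Nat.sub_self, BstAux]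
  · rw [cyc_of_le (by omega) hjn, cyc_of_le (by omega) hjn, cyc_of_le (by omega) hjn,
      seedMap_fst_of_lt _ (by omega : n - k < j + 1), seedMap_snd]
    obtain ⟨d, hd⟩ : ∃ d, n - j = d + 1 := ⟨n - j - 1, by omega⟩
    rw [hd, show n - (j + 1) = d by omega, BstAux, show n - d = j + 1 by omega,
      Nat.add_sub_cancel]

namespace IsSeed

variable {S : (ℕ → ℝ × ℝ) × (ℕ → ℝ × ℝ)}

lemma seedMap_fst_mem_openSegment (hS : IsSeed n k S.1 S.2) {j : ℕ} (hj : n - k < j)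
    (hjn : j ≤ n) : (seedMap n k S).1 j ∈ openSegment ℝ (S.1 j) (cyc n S.1 (j + 1)) := by
  obtain ⟨t, ht, h⟩ := hS.2 j hj hjn
  rw [openSegment_eq_image', seedMap_fst_of_lt S hj, h]
  exact ⟨t, ht, rfl⟩

lemma seedMap_fst_mem_halfOpenSegment (hS : IsSeed n k S.1 S.2) (hk : 1 ≤ k) {i : ℕ} (hi : 1 ≤ i)
    (hin : i ≤ n) : (seedMap n k S).1 i ∈ halfOpenSegment (cyc n S.1 i) (cyc n S.1 (i + 1)) := by
  rw [cyc_of_le hi hin]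
  by_cases hik : i ≤ n - k
  · rw [seedMap_fst_of_le S hik,
      ← cyc_of_le (n := n) (f := S.1) (i := i + 1) (by omega) (by omega)]
    exact right_mem_halfOpenSegment _ _
  · exact openSegment_subset_halfOpenSegment _ _ (hS.seedMap_fst_mem_openSegment (by omega) hin)

lemma cyc_seedMap_fst_mem_halfOpenSegment (hS : IsSeed n k S.1 S.2) (hk : 1 ≤ k) (hkn : k < n)
    {i : ℕ} (hi : 1 ≤ i) :
    cyc n (seedMap n k S).1 i ∈ halfOpenSegment (cyc n S.1 i) (cyc n S.1 (i + 1)) :=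
  cyc_mem_halfOpenSegment (by omega)
    (fun _ hi hin => hS.seedMap_fst_mem_halfOpenSegment hk hi hin) hi

lemma lineInter_mem_openSegment (hS : IsSeed n k S.1 S.2) (hn : 4 ≤ n) (hk : 1 ≤ k) (hkn : k < n)
    {j : ℕ} (hj : n - k < j) (hjn : j ≤ n) {W : ℝ × ℝ}
    (hW : W ∈ halfOpenSegment (cyc n (seedMap n k S).1 (j + 1)) (cyc n (seedMap n k S).1 (j + 2))) :
    lineInter (cyc n S.1 (j + 1)) W (cyc n (seedMap n k S).1 j) (cyc n (seedMap n k S).1 (j + 1))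
        ∈ openSegment ℝ (cyc n (seedMap n k S).1 j) (cyc n (seedMap n k S).1 (j + 1)) ∧
      lineInter (cyc n S.1 (j + 1)) W (cyc n (seedMap n k S).1 j) (cyc n (seedMap n k S).1 (j + 1))
        ∈ openSegment ℝ (cyc n S.1 (j + 1)) W := by
  have hX : cyc n (seedMap n k S).1 j ∈ openSegment ℝ (cyc n S.1 j) (cyc n S.1 (j + 1)) := by
    rw [cyc_of_le (by omega) hjn, cyc_of_le (by omega) hjn]
    exact hS.seedMap_fst_mem_openSegment hj hjn
  exact lineInter_mem_openSegment_of_quadrilateral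
    (hS.1.orient_cyc_pos (by omega) (by omega) (by omega) (by omega))
    (hS.1.orient_cyc_pos (by omega) (by omega) (by omega) (by omega))
    (hS.1.orient_cyc_pos (by omega) (by omega) (by omega) (by omega))
    (hS.1.orient_cyc_pos (by omega) (by omega) (by omega) (by omega)) hX
    (hS.cyc_seedMap_fst_mem_halfOpenSegment hk hkn (by omega))
    (hS.cyc_seedMap_fst_mem_halfOpenSegment hk hkn (by omega)) hW

theorem seedMap_snd_mem (hS : IsSeed n k S.1 S.2) (hn : 4 ≤ n) (hk : 1 ≤ k) (hkn : k < n)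
    {j : ℕ} (hj : n - k < j) (hjn : j ≤ n) :
    (seedMap n k S).2 j ∈
        openSegment ℝ (cyc n (seedMap n k S).1 j) (cyc n (seedMap n k S).1 (j + 1)) ∧
      (seedMap n k (seedMap n k S)).1 j ∈
        openSegment ℝ (cyc n S.1 (j + 1)) (cyc n (seedMap n k (seedMap n k S)).1 (j + 1)) := by
  set A' := (seedMap n k S).1
  set A'' := (seedMap n k (seedMap n k S)).1
  have hW : ∀ j, n - k < j → j ≤ n →
      cyc n A'' (j + 1) ∈ halfOpenSegment (cyc n A' (j + 1)) (cyc n A' (j + 2)) := by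
    intro j hj hjn
    revert hj
    induction hjn using Nat.decreasingInduction with
    | self =>
      intro _
      have h₁ : A'' 1 = A' 2 := seedMap_fst_of_le _ (by omega)
      rw [cyc_self_add (f := A'') (i := 1) le_rfl (by omega), h₁,
        cyc_self_add (f := A') (i := 2) (by omega) (by omega)]
      exact right_mem_halfOpenSegment _ _
    | of_succ j hjn ih =>
      intro hj
      have h₁ : A'' (j + 1) = (seedMap n k S).2 (j + 1) := seedMap_fst_of_lt _ (by omega)
      rw [cyc_of_le (f := A'') (i := j + 1) (by omega) hjn, h₁,
        seedMap_snd_eq_lineInter S hkn (by omega) hjn]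
      exact openSegment_subset_halfOpenSegment _ _
        (hS.lineInter_mem_openSegment hn hk hkn (by omega) hjn (ih (by omega))).1
  have h₁ : A'' j = (seedMap n k S).2 j := seedMap_fst_of_lt _ hj
  rw [h₁, seedMap_snd_eq_lineInter S hkn hj hjn]
  exact hS.lineInter_mem_openSegment hn hk hkn hj hjn (hW j hj hjn)

theorem isSeed_seedMap (hS : IsSeed n k S.1 S.2) (hn : 4 ≤ n) (hk : 1 ≤ k) (hkn : k < n) :
    IsSeed n k (seedMap n k S).1 (seedMap n k S).2 := by
  refine ⟨hS.1.of_mem_halfOpenSegment fun i hi hin => ?_, fun j hj hjn => ?_⟩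
  · exact hS.seedMap_fst_mem_halfOpenSegment hk hi hin
  · have h := (hS.seedMap_snd_mem hn hk hkn (by omega) hjn).1
    rw [cyc_of_le (by omega) hjn, cyc_succ, openSegment_eq_image'] at h
    obtain ⟨t, ht, h⟩ := h
    exact ⟨t, ht, h.symm⟩

end IsSeed

end SeedMap

section Spiral

variable {n k : ℕ} {S : (ℕ → ℝ × ℝ) × (ℕ → ℝ × ℝ)}

theorem IsSeed.isSeed_iterate (hS : IsSeed n k S.1 S.2) (hn : 4 ≤ n) (hk : 1 ≤ k) (hkn : k < n)
    (m : ℕ) :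
    IsSeed n k ((seedMap n k)^[m] S).1 ((seedMap n k)^[m] S).2 := by
  induction m with
  | zero => exact hS
  | succ m ih => rw [Function.iterate_succ_apply']; exact ih.isSeed_seedMap hn hk hkn

lemma iterate_seedMap_fst (S : (ℕ → ℝ × ℝ) × (ℕ → ℝ × ℝ)) {i : ℕ} (hi : i ≤ n - k) (m : ℕ) :
    ((seedMap n k)^[m] S).1 (i + 1) = ((seedMap n k)^[m + i] S).1 1 := by
  induction i generalizing m with
  | zero => rfl
  | succ i ih =>
    rw [← seedMap_fst_of_le _ hi, ← Function.iterate_succ_apply' (seedMap n k),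
      ih (by omega), Nat.succ_add, Nat.add_succ]

lemma IsSeed.iterate_fst_mem_openSegment (hS : IsSeed n k S.1 S.2) (hn : 4 ≤ n) (hk : 1 ≤ k)
    (hkn : k < n) (m : ℕ) {j : ℕ} (hj : n - k < j) (hjn : j ≤ n) :
    ((seedMap n k)^[m + 2] S).1 j ∈ openSegment ℝ (cyc n ((seedMap n k)^[m] S).1 (j + 1))
      (cyc n ((seedMap n k)^[m + 2] S).1 (j + 1)) := by
  rw [Function.iterate_succ_apply', Function.iterate_succ_apply']
  exact ((hS.isSeed_iterate hn hk hkn m).seedMap_snd_mem hn hk hkn hj hjn).2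

theorem IsSeed.mem_convexHull_iterate (hS : IsSeed n k S.1 S.2) (hn : 4 ≤ n) (hk : 1 ≤ k)
    (hkn : k < n) {M m : ℕ} (hm : M + 2 * n ≤ m) {j : ℕ} (hj : 1 ≤ j) (hjn : j ≤ n) :
    ((seedMap n k)^[m] S).1 j ∈
      convexHull ℝ ((fun r => ((seedMap n k)^[r] S).1 1) '' Ici M) := by
  set H := convexHull ℝ ((fun r => ((seedMap n k)^[r] S).1 1) '' Ici M)
  have key : ∀ d ≤ n, ∀ m ≥ M + 2 * d, cyc n ((seedMap n k)^[m] S).1 (n + 1 - d) ∈ H := by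
    intro d
    induction d with
    | zero =>
      intro _ m hm
      rw [Nat.sub_zero, cyc_self_add le_rfl (by omega)]
      exact subset_convexHull ℝ _ ⟨m, by simpa using hm, rfl⟩
    | succ d ih =>
      intro hd m hm
      rw [cyc_of_le (by omega) (by omega)]
      by_cases hjk : n - d ≤ n - k + 1
      · rw [show n + 1 - (d + 1) = n - d - 1 + 1 by omega, iterate_seedMap_fst S (by omega)]
        exact subset_convexHull ℝ _ ⟨_, by simp only [mem_Ici]; omega, rfl⟩
      · obtain ⟨m', rfl⟩ : ∃ m', m = m' + 2 := ⟨m - 2, by omega⟩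
        have hchord :=
          hS.iterate_fst_mem_openSegment hn hk hkn m' (j := n - d) (by omega) (by omega)
        rw [show n - d + 1 = n + 1 - d by omega] at hchord
        rw [show n + 1 - (d + 1) = n - d by omega]
        exact (convex_convexHull ℝ _).openSegment_subset (ih (by omega) m' (by omega))
          (ih (by omega) (m' + 2) (by omega)) hchord
  have := key (n + 1 - j) (by omega) m (by omega)
  rwa [show n + 1 - (n + 1 - j) = j by omega, cyc_of_le hj hjn] at this

end Spiral

theorem spiral_winds_infinitely_general (n k : ℕ) (hn : 4 ≤ n) (hk1 : 1 ≤ k) (hkn : k ≤ n - 1)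
    (A B : ℕ → ℝ × ℝ) (hS : IsSeed n k A B)
    (c : ℝ × ℝ)
    (hc : (⋂ m : ℕ, convexHull ℝ (((seedMap n k)^[m] (A, B)).1 '' Set.Icc 1 n)) = {c}) :
    ∀ u : ℝ × ℝ, u ≠ 0 → ∀ M : ℕ, ∃ m : ℕ, M ≤ m ∧
      ∃ x ∈ segment ℝ (((seedMap n k)^[m] (A, B)).1 1)
          (((seedMap n k)^[m + 1] (A, B)).1 1),
        ∃ t : ℝ, 0 ≤ t ∧ x = c + t • u := by
  have hk : k < n := by omega
  have hcK : ∀ m, c ∈ convexHull ℝ (((seedMap n k)^[m] (A, B)).1 '' Icc 1 n) :=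
    mem_iInter.1 (hc ▸ mem_singleton c)
  have hnext : ∀ m, ((seedMap n k)^[m + 1] (A, B)).1 1 = ((seedMap n k)^[m] (A, B)).1 2 :=
    fun m => (iterate_seedMap_fst (A, B) (by omega) m).symm
  intro u hu M
  refine exists_segment_meets_ray (fun m => ?_) (fun M => ?_) hu M
  · rw [hnext]
    exact orient_pos_or_mem_segment_of_mem_convexHull
      (hS.isSeed_iterate hn hk1 hk m).1.orient_pos_or_eq (hcK m)
  · refine convexHull_min ?_ (convex_convexHull ℝ _) (hcK (M + 2 * n))
    rintro _ ⟨j, ⟨hj, hjn⟩, rfl⟩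
    exact hS.mem_convexHull_iterate hn hk1 hk le_rfl hj hjn

/-- **A PLC pentagram spiral winds infinitely many times around its limit point.**
Let `S = (A,B)` be a seed of type `(n,k)` with `(n,k) ≠ (4,1)`, let
`p m = A_1(T_{n,k}^m(S))` be the inward spiral vertices, and let `c` be the unique
point of `⋂ m, K m`, where `K m` is the convex hull of the vertices of
`T_{n,k}^m(S)`.  Then for every closed ray `{c + t•u : t ≥ 0}` emanating from `c`
(`u ≠ 0`) and every `M`, there exists `m ≥ M` such that the segment
`[p m, p (m+1)]` meets the ray. -/
theorem spiral_winds_infinitely (n k : ℕ) (hn : 4 ≤ n) (hk1 : 1 ≤ k) (hkn : k ≤ n - 1)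
    (hne : ¬(n = 4 ∧ k = 1)) (A B : ℕ → ℝ × ℝ) (hS : IsSeed n k A B)
    (c : ℝ × ℝ)
    (hc : (⋂ m : ℕ, convexHull ℝ (((seedMap n k)^[m] (A, B)).1 '' Set.Icc 1 n)) = {c}) :
    ∀ u : ℝ × ℝ, u ≠ 0 → ∀ M : ℕ, ∃ m : ℕ, M ≤ m ∧
      ∃ x ∈ segment ℝ (((seedMap n k)^[m] (A, B)).1 1)
          (((seedMap n k)^[m + 1] (A, B)).1 1),
        ∃ t : ℝ, 0 ≤ t ∧ x = c + t • u :=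
  spiral_winds_infinitely_general n k hn hk1 hkn A B hS c hc
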